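/- For every exponent p ∈ (0,α) with α ∈ (0,2), the integral γ(α,p) = ∫_0^1 (t^p − 1)(1 − t^{α−p−1}) / (1−t)^{1+α} dt converges (is finite), i.e. the integrand is integrable on (0,1). -/

import Mathlib

/-!
Near `0` the integrand is bounded by a multiple of `1 + t ^ (α - p - 1)`, integrable because
`α - p - 1 > -1`. Near `1`, since `t ↦ t ^ s` is Lipschitz on `[1/2, 1]`, both factors of the
numerator are `O(1 - t)`, so the integrand is `O((1 - t) ^ (1 - α))`, integrable because `α < 2`.
-/

open Set MeasureTheory

lemma exists_abs_rpow_sub_one_le_mul_one_sub (s : ℝ) {a : ℝ} (ha : 0 < a) :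
    ∃ C, ∀ t ∈ Icc a 1, |t ^ s - 1| ≤ C * (1 - t) := by
  have hdiff : ContDiffOn ℝ 1 (fun t : ℝ => t ^ s) (Icc a 1) := fun t ht =>
    (Real.contDiffAt_rpow_const_of_ne (ha.trans_le ht.1).ne').contDiffWithinAt
  obtain ⟨K, hK⟩ := hdiff.exists_lipschitzOnWith one_ne_zero (convex_Icc a 1) isCompact_Icc
  refine ⟨K, fun t ht => ?_⟩
  have h := hK.dist_le_mul t ht 1 ⟨ht.1.trans ht.2, le_rfl⟩
  rwa [Real.one_rpow, Real.dist_eq, Real.dist_eq, abs_sub_comm t,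
    abs_of_nonneg (sub_nonneg.2 ht.2)] at h

lemma integrableOn_one_sub_rpow {r : ℝ} (hr : -1 < r) {a : ℝ} (ha : a ≤ 1) :
    IntegrableOn (fun t : ℝ => (1 - t) ^ r) (Ico a 1) := by
  have h := (intervalIntegral.intervalIntegrable_rpow' (a := 0) (b := 1 - a) hr).comp_sub_left 1
  rw [sub_zero, sub_sub_cancel] at h
  exact (intervalIntegrable_iff_integrableOn_Ico_of_le ha).1 h.symm

/-- `γ(α, p)` integrates `gammaIntegrand p (α - p - 1) (1 + α)`. -/
noncomputable def gammaIntegrand (p q β t : ℝ) : ℝ :=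
  (t ^ p - 1) * (1 - t ^ q) / (1 - t) ^ β

section

variable {p q β : ℝ}

lemma measurable_gammaIntegrand : Measurable (gammaIntegrand p q β) := by
  unfold gammaIntegrand; fun_prop

lemma integrableOn_gammaIntegrand_Ioo_zero_half (hp : 0 ≤ p) (hq : -1 < q) (hβ : 0 ≤ β) :
    IntegrableOn (gammaIntegrand p q β) (Ioo 0 (1 / 2)) := by
  have hg : IntegrableOn (fun t : ℝ => 2 ^ β * (1 + t ^ q)) (Ioo 0 (1 / 2)) :=
    ((integrableOn_const measure_Ioo_lt_top.ne).add
      ((intervalIntegral.integrableOn_Ioo_rpow_iff (by norm_num)).2 hq)).const_mul _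
  refine hg.integrable.mono' measurable_gammaIntegrand.aestronglyMeasurable
    (ae_restrict_of_forall_mem measurableSet_Ioo fun t ⟨ht0, ht⟩ => ?_)
  have hpow : |t ^ p - 1| ≤ 1 := by
    have := Real.rpow_le_one ht0.le (by linarith) hp
    rw [abs_sub_comm, abs_of_nonneg (by linarith)]
    linarith [Real.rpow_pos_of_pos ht0 p]
  have hqpow : |1 - t ^ q| ≤ 1 + t ^ q := by
    simpa [abs_of_pos (Real.rpow_pos_of_pos ht0 q)] using abs_sub (1 : ℝ) (t ^ q)
  have hd : 0 < (1 - t) ^ β := Real.rpow_pos_of_pos (by linarith) _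
  have hden : 1 / (1 - t) ^ β ≤ 2 ^ β := by
    rw [div_le_iff₀ hd, ← Real.mul_rpow (by norm_num) (by linarith)]
    exact Real.one_le_rpow (by linarith) hβ
  calc ‖gammaIntegrand p q β t‖ = |t ^ p - 1| * |1 - t ^ q| * (1 / (1 - t) ^ β) := by
        rw [gammaIntegrand, Real.norm_eq_abs, abs_div, abs_mul, abs_of_pos hd, mul_one_div]
    _ ≤ 1 * (1 + t ^ q) * 2 ^ β := by have := one_div_pos.2 hd; gcongr
    _ = 2 ^ β * (1 + t ^ q) := by ring

lemma integrableOn_gammaIntegrand_Ico_half_one (hβ : β < 3) :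
    IntegrableOn (gammaIntegrand p q β) (Ico (1 / 2) 1) := by
  obtain ⟨Cp, hCp⟩ := exists_abs_rpow_sub_one_le_mul_one_sub p (a := 1 / 2) (by norm_num)
  obtain ⟨Cq, hCq⟩ := exists_abs_rpow_sub_one_le_mul_one_sub q (a := 1 / 2) (by norm_num)
  have hg : IntegrableOn (fun t : ℝ => Cp * Cq * (1 - t) ^ (2 - β)) (Ico (1 / 2) 1) :=
    (integrableOn_one_sub_rpow (by linarith) (by norm_num)).const_mul _
  refine hg.integrable.mono' measurable_gammaIntegrand.aestronglyMeasurable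
    (ae_restrict_of_forall_mem measurableSet_Ico fun t ht => ?_)
  have hu : 0 < 1 - t := sub_pos.2 ht.2
  have ht' : t ∈ Icc (1 / 2) 1 := Ico_subset_Icc_self ht
  calc ‖gammaIntegrand p q β t‖ = |t ^ p - 1| * |t ^ q - 1| / (1 - t) ^ β := by
        rw [gammaIntegrand, Real.norm_eq_abs, abs_div, abs_mul, abs_sub_comm 1,
          abs_of_pos (Real.rpow_pos_of_pos hu _)]
    _ ≤ Cp * (1 - t) * (Cq * (1 - t)) / (1 - t) ^ β := by
        have hCpt := hCp t ht'
        have hCqt := hCq t ht'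
        gcongr
        exact (abs_nonneg _).trans hCpt
    _ = Cp * Cq * (1 - t) ^ (2 - β) := by
        rw [Real.rpow_sub hu, Real.rpow_two]; ring

end

theorem gamma_integrand_integrable_general (α p : ℝ) (hα2 : α < 2)
    (hp : 0 < p) (hpα : p < α) :
    MeasureTheory.IntegrableOn
      (fun t : ℝ => (t ^ p - 1) * (1 - t ^ (α - p - 1)) / (1 - t) ^ (1 + α))
      (Ioo (0 : ℝ) 1) := by
  rw [← Ioo_union_Ico_eq_Ioo (b := 1 / 2) (by norm_num) (by norm_num)]
  exact (integrableOn_gammaIntegrand_Ioo_zero_half hp.le (by linarith) (by linarith)).union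
    (integrableOn_gammaIntegrand_Ico_half_one (by linarith))

/-- For `α ∈ (0,2)` and `p ∈ (0,α)`, the integrand of `γ(α,p)` is integrable on `(0,1)`. -/
theorem gamma_integrand_integrable (α p : ℝ) (hα : 0 < α) (hα2 : α < 2)
    (hp : 0 < p) (hpα : p < α) :
    MeasureTheory.IntegrableOn
      (fun t : ℝ => (t ^ p - 1) * (1 - t ^ (α - p - 1)) / (1 - t) ^ (1 + α))
      (Ioo (0 : ℝ) 1) :=
  gamma_integrand_integrable_general α p hα2 hp hpα
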